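/- Let G = (V,E;w) be a finite simple undirected connected graph with at least two vertices and positive vertex weights. Then the bottleneck decomposition of G exists and is unique: there is exactly one finite sequence {(B_1,C_1),…,(B_k,C_k)} such that, setting V_1 = V and V_{i+1} = V_i ∖ (B_i ∪ C_i), for every i ∈ {1,…,k} the induced subgraph G[V_i] is nonempty and has no isolated vertices, B_i is the unique maximal bottleneck of G[V_i], C_i = Γ_{G[V_i]}(B_i), and V_{k+1} = ∅. -/

import Mathlib

open Finset

/-- The total weight of a finite set of vertices. -/
def wsum {V : Type*} (w : V → ℝ) (S : Finset V) : ℝ := ∑ v ∈ S, w v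

/-- The neighborhood of `S` inside the induced subgraph on `A`: all vertices of `A` adjacent
to at least one vertex of `S`. -/
def nbhdIn {V : Type*} [DecidableEq V] (G : SimpleGraph V) [DecidableRel G.Adj]
    (A S : Finset V) : Finset V :=
  A.filter fun v => ∃ u ∈ S, G.Adj u v

/-- The α-ratio of `S` computed inside the induced subgraph on `A`. -/
noncomputable def alphaIn {V : Type*} [DecidableEq V] (G : SimpleGraph V)
    [DecidableRel G.Adj] (w : V → ℝ) (A S : Finset V) : ℝ :=
  wsum w (nbhdIn G A S) / wsum w S

/-- `B` is the maximal bottleneck of the induced subgraph `G[A]`: it is a nonempty subset of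
`A` of minimal α-ratio (within `G[A]`) and every strictly larger subset of `A` has strictly
larger α-ratio. -/
def IsMaxBottleneckIn {V : Type*} [DecidableEq V] (G : SimpleGraph V) [DecidableRel G.Adj]
    (w : V → ℝ) (A B : Finset V) : Prop :=
  B.Nonempty ∧ B ⊆ A ∧
    (∀ S : Finset V, S.Nonempty → S ⊆ A → alphaIn G w A B ≤ alphaIn G w A S) ∧
    ∀ B' : Finset V, B ⊂ B' → B' ⊆ A → alphaIn G w A B < alphaIn G w A B'


/-- `(B, C)` (a sequence of `k` pairs of vertex sets) is the bottleneck decomposition of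
`G`: setting `V_1 = V` and `V_{i+1} = V_i ∖ (B_i ∪ C_i)`, for every `i` the induced
subgraph `G[V_i]` is nonempty and has no isolated vertices, `B_i` is the unique maximal
bottleneck of `G[V_i]`, `C_i = Γ_{G[V_i]}(B_i)`, and `V_{k+1} = ∅`. -/
def IsBottleneckDecomposition {V : Type*} [Fintype V] [DecidableEq V] (G : SimpleGraph V)
    [DecidableRel G.Adj] (w : V → ℝ) (k : ℕ) (B C : Fin k → Finset V) : Prop :=
  ∃ Vs : Fin (k + 1) → Finset V,
    Vs 0 = univ ∧
    (∀ i : Fin k, Vs i.succ = Vs i.castSucc \ (B i ∪ C i)) ∧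
    (∀ i : Fin k,
      (Vs i.castSucc).Nonempty ∧
      (∀ x ∈ Vs i.castSucc, ∃ y ∈ Vs i.castSucc, G.Adj x y) ∧
      IsMaxBottleneckIn G w (Vs i.castSucc) (B i) ∧
      (∀ B' : Finset V, IsMaxBottleneckIn G w (Vs i.castSucc) B' → B' = B i) ∧
      C i = nbhdIn G (Vs i.castSucc) (B i)) ∧
    Vs (Fin.last k) = ∅

/-!
Fix a vertex set `A` and let `m` be the minimal α-ratio of `G[A]`. The deficiency
`X ↦ w(Γ_A X) - m w(X)` is nonnegative and submodular on subsets of `A`, so the union of two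
bottlenecks is again a bottleneck; hence a maximal bottleneck exists and is unique. Deleting
`B ∪ Γ_A(B)` leaves no isolated vertex, since such a vertex could be added to `B` without
enlarging `Γ_A(B)`, which would not increase the ratio. So every step of the decomposition is
forced and possible, and it terminates because each step removes the nonempty set `B`.
-/

section

variable {V : Type*}

lemma wsum_pos {w : V → ℝ} (hw : ∀ v, 0 < w v) {S : Finset V} (hS : S.Nonempty) :
    0 < wsum w S :=
  sum_pos (fun v _ => hw v) hS

lemma wsum_mono {w : V → ℝ} (hw : ∀ v, 0 ≤ w v) {S T : Finset V} (h : S ⊆ T) :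
    wsum w S ≤ wsum w T :=
  sum_le_sum_of_subset_of_nonneg h fun v _ _ => hw v

lemma wsum_union_add_wsum_inter [DecidableEq V] (w : V → ℝ) (S T : Finset V) :
    wsum w (S ∪ T) + wsum w (S ∩ T) = wsum w S + wsum w T :=
  sum_union_inter

section Neighborhood

variable [DecidableEq V] (G : SimpleGraph V) [DecidableRel G.Adj] (A : Finset V)

lemma mem_nbhdIn {S : Finset V} {v : V} : v ∈ nbhdIn G A S ↔ v ∈ A ∧ ∃ u ∈ S, G.Adj u v :=
  mem_filter

lemma nbhdIn_subset (S : Finset V) : nbhdIn G A S ⊆ A :=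
  filter_subset _ _

lemma nbhdIn_empty : nbhdIn G A ∅ = ∅ := by
  simp [nbhdIn]

lemma nbhdIn_union (S T : Finset V) :
    nbhdIn G A (S ∪ T) = nbhdIn G A S ∪ nbhdIn G A T := by
  ext v
  simp only [mem_nbhdIn, mem_union]
  grind

lemma nbhdIn_inter_subset (S T : Finset V) :
    nbhdIn G A (S ∩ T) ⊆ nbhdIn G A S ∩ nbhdIn G A T := by
  intro v
  simp only [mem_nbhdIn, mem_inter]
  grind

lemma wsum_nbhdIn_union_add_inter_le {w : V → ℝ} (hw : ∀ v, 0 ≤ w v) (S T : Finset V) :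
    wsum w (nbhdIn G A (S ∪ T)) + wsum w (nbhdIn G A (S ∩ T)) ≤
      wsum w (nbhdIn G A S) + wsum w (nbhdIn G A T) := by
  rw [nbhdIn_union, ← wsum_union_add_wsum_inter w (nbhdIn G A S)]
  exact add_le_add le_rfl (wsum_mono hw (nbhdIn_inter_subset G A S T))

end Neighborhood

section AlphaRatio

variable [DecidableEq V] (G : SimpleGraph V) [DecidableRel G.Adj] {w : V → ℝ} {A : Finset V}

lemma alphaIn_le_iff (hw : ∀ v, 0 < w v) {S : Finset V} (hS : S.Nonempty) {m : ℝ} :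
    alphaIn G w A S ≤ m ↔ wsum w (nbhdIn G A S) ≤ m * wsum w S :=
  div_le_iff₀ (wsum_pos hw hS)

lemma le_alphaIn_iff (hw : ∀ v, 0 < w v) {S : Finset V} (hS : S.Nonempty) {m : ℝ} :
    m ≤ alphaIn G w A S ↔ m * wsum w S ≤ wsum w (nbhdIn G A S) :=
  le_div_iff₀ (wsum_pos hw hS)

lemma alphaIn_le_of_subset_of_nbhdIn_subset (hw : ∀ v, 0 < w v) {S T : Finset V}
    (hS : S.Nonempty) (hST : S ⊆ T) (hN : nbhdIn G A T ⊆ nbhdIn G A S) :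
    alphaIn G w A T ≤ alphaIn G w A S := by
  have hw₀ : ∀ v, 0 ≤ w v := fun v => (hw v).le
  calc wsum w (nbhdIn G A T) / wsum w T
      ≤ wsum w (nbhdIn G A S) / wsum w T :=
        div_le_div_of_nonneg_right (wsum_mono hw₀ hN) (wsum_pos hw (hS.mono hST)).le
    _ ≤ wsum w (nbhdIn G A S) / wsum w S :=
        div_le_div_of_nonneg_left (sum_nonneg fun v _ => hw₀ v) (wsum_pos hw hS)
          (wsum_mono hw₀ hST)

/-- The deficiency `X ↦ w(Γ_A X) - m w(X)` is nonnegative and submodular, so its zero set is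
closed under union. -/
lemma alphaIn_union_eq (hw : ∀ v, 0 < w v) {m : ℝ}
    (hmin : ∀ X : Finset V, X.Nonempty → X ⊆ A → m ≤ alphaIn G w A X)
    {S T : Finset V} (hS : S.Nonempty) (hT : T.Nonempty) (hSA : S ⊆ A) (hTA : T ⊆ A)
    (hSm : alphaIn G w A S = m) (hTm : alphaIn G w A T = m) :
    alphaIn G w A (S ∪ T) = m := by
  have hdef : ∀ X ⊆ A, m * wsum w X ≤ wsum w (nbhdIn G A X) := by
    intro X hXA
    rcases X.eq_empty_or_nonempty with rfl | hX
    · simp [wsum, nbhdIn_empty]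
    · exact (le_alphaIn_iff G hw hX).1 (hmin X hX hXA)
  have hST : (S ∪ T).Nonempty := hS.mono subset_union_left
  refine le_antisymm ((alphaIn_le_iff G hw hST).2 ?_) (hmin _ hST (union_subset hSA hTA))
  have hsub := wsum_nbhdIn_union_add_inter_le G A (fun v => (hw v).le) S T
  have hinter := hdef (S ∩ T) (inter_subset_left.trans hSA)
  have hmod := wsum_union_add_wsum_inter w S T
  have hS' := (alphaIn_le_iff G hw hS).1 hSm.le
  have hT' := (alphaIn_le_iff G hw hT).1 hTm.le
  linear_combination hsub + hinter + hS' + hT' - m * hmod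

lemma exists_isMaxBottleneckIn (w : V → ℝ) (hA : A.Nonempty) :
    ∃ B, IsMaxBottleneckIn G w A B := by
  obtain ⟨M, hM, hMmin⟩ :=
    exists_min_image (A.powerset.filter Finset.Nonempty) (alphaIn G w A) ⟨A, by simpa using hA⟩
  simp only [mem_filter, mem_powerset, and_imp] at hM hMmin
  obtain ⟨B, hB⟩ := exists_maximal
    (s := A.powerset.filter fun X => X.Nonempty ∧ alphaIn G w A X = alphaIn G w A M)
    ⟨M, by simp [hM]⟩
  simp only [mem_filter, mem_powerset, Maximal, and_imp] at hB
  obtain ⟨⟨hBA, hBne, hBM⟩, hBmax⟩ := hB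
  refine ⟨B, hBne, hBA, fun S hS hSA => hBM ▸ hMmin S hSA hS, fun B' hBB' hB'A => ?_⟩
  refine (hBM ▸ hMmin B' hB'A (hBne.mono hBB'.subset)).lt_of_ne fun h => ?_
  exact hBB'.not_subset (hBmax hB'A (hBne.mono hBB'.subset) (hBM ▸ h.symm) hBB'.subset)

lemma IsMaxBottleneckIn.subset_of_alphaIn_le (hw : ∀ v, 0 < w v) {B S : Finset V}
    (hB : IsMaxBottleneckIn G w A B) (hS : S.Nonempty) (hSA : S ⊆ A)
    (h : alphaIn G w A S ≤ alphaIn G w A B) : S ⊆ B := by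
  obtain ⟨hBne, hBA, hmin, hmax⟩ := hB
  have hU := alphaIn_union_eq G hw hmin hBne hS hBA hSA rfl (h.antisymm (hmin S hS hSA))
  by_contra hSB
  exact (hmax _ (left_lt_sup.2 hSB) (union_subset hBA hSA)).ne hU.symm

lemma IsMaxBottleneckIn.eq (hw : ∀ v, 0 < w v) {B₁ B₂ : Finset V}
    (h₁ : IsMaxBottleneckIn G w A B₁) (h₂ : IsMaxBottleneckIn G w A B₂) : B₁ = B₂ :=
  (h₂.subset_of_alphaIn_le G hw h₁.1 h₁.2.1 (h₁.2.2.1 _ h₂.1 h₂.2.1)).antisymm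
    (h₁.subset_of_alphaIn_le G hw h₂.1 h₂.2.1 (h₂.2.2.1 _ h₁.1 h₁.2.1))

lemma IsMaxBottleneckIn.exists_adj_sdiff (hw : ∀ v, 0 < w v) {B : Finset V}
    (hB : IsMaxBottleneckIn G w A B) {x : V} (hx : x ∈ A \ (B ∪ nbhdIn G A B)) :
    ∃ y ∈ A \ (B ∪ nbhdIn G A B), G.Adj x y := by
  by_contra! hiso
  simp only [mem_sdiff, mem_union, not_or] at hx hiso
  obtain ⟨hxA, hxB, hxN⟩ := hx
  have hN : nbhdIn G A (insert x B) ⊆ nbhdIn G A B := by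
    intro v hv
    obtain ⟨hvA, u, hu, huv⟩ := (mem_nbhdIn G A).1 hv
    rcases mem_insert.1 hu with rfl | huB
    · by_contra hvN
      have hvB : v ∉ B := fun hvB => hxN ((mem_nbhdIn G A).2 ⟨hxA, v, hvB, huv.symm⟩)
      exact hiso v ⟨hvA, hvB, hvN⟩ huv
    · exact (mem_nbhdIn G A).2 ⟨hvA, u, huB, huv⟩
  exact (hB.2.2.2 _ (ssubset_insert hxB) (insert_subset hxA hB.2.1)).not_ge
    (alphaIn_le_of_subset_of_nbhdIn_subset G hw hB.1 (subset_insert x B) hN)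

end AlphaRatio

section Decomposition

variable [DecidableEq V] (G : SimpleGraph V) [DecidableRel G.Adj] (w : V → ℝ)

def IsBottleneckStep (A B C : Finset V) : Prop :=
  A.Nonempty ∧ (∀ x ∈ A, ∃ y ∈ A, G.Adj x y) ∧ IsMaxBottleneckIn G w A B ∧
    (∀ B' : Finset V, IsMaxBottleneckIn G w A B' → B' = B) ∧ C = nbhdIn G A B

def IsBottleneckDecompositionOf (A : Finset V) (k : ℕ) (B C : Fin k → Finset V) : Prop :=
  ∃ Vs : Fin (k + 1) → Finset V,
    Vs 0 = A ∧
    (∀ i : Fin k, Vs i.succ = Vs i.castSucc \ (B i ∪ C i)) ∧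
    (∀ i : Fin k, IsBottleneckStep G w (Vs i.castSucc) (B i) (C i)) ∧
    Vs (Fin.last k) = ∅

variable {G w}

lemma isBottleneckDecompositionOf_zero_iff {A : Finset V} {B C : Fin 0 → Finset V} :
    IsBottleneckDecompositionOf G w A 0 B C ↔ A = ∅ := by
  constructor
  · rintro ⟨Vs, h0, -, -, hlast⟩
    exact h0 ▸ hlast
  · rintro rfl
    exact ⟨fun _ => ∅, rfl, finZeroElim, finZeroElim, rfl⟩

lemma isBottleneckDecompositionOf_succ_iff {A : Finset V} {k : ℕ}
    {B C : Fin (k + 1) → Finset V} :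
    IsBottleneckDecompositionOf G w A (k + 1) B C ↔
      IsBottleneckStep G w A (B 0) (C 0) ∧
        IsBottleneckDecompositionOf G w (A \ (B 0 ∪ C 0)) k (Fin.tail B) (Fin.tail C) := by
  constructor
  · rintro ⟨Vs, h0, hsucc, hstep, hlast⟩
    refine ⟨h0 ▸ hstep 0, Fin.tail Vs, h0 ▸ hsucc 0, fun i => ?_, fun i => ?_, hlast⟩
    · simpa only [Fin.tail, Fin.succ_castSucc] using hsucc i.succ
    · simpa only [Fin.tail, Fin.succ_castSucc] using hstep i.succ
  · rintro ⟨hstep0, Vs, h0, hsucc, hstep, hlast⟩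
    refine ⟨Fin.cons A Vs, rfl, fun i => ?_, fun i => ?_, by simpa [← Fin.succ_last] using hlast⟩
    · cases i using Fin.cases with
      | zero => simpa using h0
      | succ i => simpa only [← Fin.succ_castSucc, Fin.cons_succ, Fin.tail] using hsucc i
    · cases i using Fin.cases with
      | zero => simpa using hstep0
      | succ i => simpa only [← Fin.succ_castSucc, Fin.cons_succ, Fin.tail] using hstep i

theorem exists_isBottleneckDecompositionOf (hw : ∀ v, 0 < w v) (A : Finset V)
    (hA : ∀ x ∈ A, ∃ y ∈ A, G.Adj x y) :
    ∃ k B C, IsBottleneckDecompositionOf G w A k B C := by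
  induction A using Finset.strongInduction with
  | H A ih =>
  rcases A.eq_empty_or_nonempty with rfl | hne
  · exact ⟨0, finZeroElim, finZeroElim, isBottleneckDecompositionOf_zero_iff.2 rfl⟩
  obtain ⟨B₀, hB₀⟩ := exists_isMaxBottleneckIn G w hne
  have hrest : A \ (B₀ ∪ nbhdIn G A B₀) ⊂ A :=
    sdiff_ssubset (union_subset hB₀.2.1 (nbhdIn_subset G A B₀)) (hB₀.1.mono subset_union_left)
  obtain ⟨k, B, C, hd⟩ := ih _ hrest fun x hx => hB₀.exists_adj_sdiff G hw hx
  refine ⟨k + 1, Fin.cons B₀ B, Fin.cons (nbhdIn G A B₀) C,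
    isBottleneckDecompositionOf_succ_iff.2 ?_⟩
  simpa using ⟨⟨hne, hA, hB₀, fun B' h => h.eq G hw hB₀, rfl⟩, hd⟩

theorem IsBottleneckDecompositionOf.unique {A : Finset V} {k k' : ℕ}
    {B C : Fin k → Finset V} {B' C' : Fin k' → Finset V}
    (h : IsBottleneckDecompositionOf G w A k B C)
    (h' : IsBottleneckDecompositionOf G w A k' B' C') :
    (⟨k, B, C⟩ : (k : ℕ) × ((Fin k → Finset V) × (Fin k → Finset V))) = ⟨k', B', C'⟩ := by
  induction k generalizing A k' with
  | zero =>
    obtain rfl := isBottleneckDecompositionOf_zero_iff.1 h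
    cases k' with
    | zero => congr <;> exact Subsingleton.elim _ _
    | succ k' => exact absurd (isBottleneckDecompositionOf_succ_iff.1 h').1.1 not_nonempty_empty
  | succ k ih =>
    obtain ⟨hstep, htail⟩ := isBottleneckDecompositionOf_succ_iff.1 h
    cases k' with
    | zero => exact absurd (isBottleneckDecompositionOf_zero_iff.1 h') hstep.1.ne_empty
    | succ k' =>
      obtain ⟨hstep', htail'⟩ := isBottleneckDecompositionOf_succ_iff.1 h'
      have hB : B 0 = B' 0 := (hstep.2.2.2.1 _ hstep'.2.2.1).symm
      have hC : C 0 = C' 0 := by rw [hstep.2.2.2.2, hstep'.2.2.2.2, hB]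
      rw [← hB, ← hC] at htail'
      obtain ⟨rfl, htails⟩ := Sigma.mk.inj_iff.1 (ih htail htail')
      obtain ⟨hBt, hCt⟩ := Prod.mk.inj (eq_of_heq htails)
      rw [← Fin.cons_self_tail B, ← Fin.cons_self_tail B', ← Fin.cons_self_tail C,
        ← Fin.cons_self_tail C', hB, hC, hBt, hCt]

end Decomposition

end

/-- every connected graph with at least two vertices and positive vertex
weights has exactly one bottleneck decomposition. -/
theorem bottleneck_decomposition_exists_unique {V : Type*} [Fintype V] [DecidableEq V]
    (G : SimpleGraph V) [DecidableRel G.Adj] (w : V → ℝ)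
    (hw : ∀ v, 0 < w v) (hconn : G.Connected) (hcard : 2 ≤ Fintype.card V) :
    ∃! d : (k : ℕ) × ((Fin k → Finset V) × (Fin k → Finset V)),
      IsBottleneckDecomposition G w d.1 d.2.1 d.2.2 := by
  have : Nontrivial V := Fintype.one_lt_card_iff_nontrivial.1 hcard
  have hadj : ∀ x ∈ (univ : Finset V), ∃ y ∈ (univ : Finset V), G.Adj x y := fun x _ =>
    (hconn.preconnected.exists_adj_of_nontrivial x).imp fun y hxy => ⟨mem_univ y, hxy⟩
  obtain ⟨k, B, C, hd⟩ := exists_isBottleneckDecompositionOf hw univ hadj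
  exact ⟨⟨k, B, C⟩, hd, fun _ hd' => IsBottleneckDecompositionOf.unique hd' hd⟩
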